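/- Let u = (u₁,u₂,u₃) ∈ ℝ³ with u₁² + u₂² + u₃² = 1 and set b := (√3·u₁ + u₂)/2. If −1/2 < b < 1, then λ₃(u) > λ₁(u) and λ₃(u) > λ₂(u); that is, λ₃(u) is the strictly largest of the three eigenvalues λ₁(u), λ₂(u), λ₃(u). -/
import Mathlib


/-- `D(u) = √((u₁ − √3 u₂)² + 4 u₃²)`. -/
noncomputable def Dq (u₁ u₂ u₃ : ℝ) : ℝ :=
  Real.sqrt ((u₁ - Real.sqrt 3 * u₂) ^ 2 + 4 * u₃ ^ 2)

noncomputable def lam₁ (u₁ u₂ u₃ : ℝ) : ℝ :=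
  -(1 / 2) * (u₁ + u₂ / Real.sqrt 3)
noncomputable def lam₂ (u₁ u₂ u₃ : ℝ) : ℝ :=
  (1 / 4) * ((u₁ + u₂ / Real.sqrt 3) - Dq u₁ u₂ u₃)
noncomputable def lam₃ (u₁ u₂ u₃ : ℝ) : ℝ :=
  (1 / 4) * ((u₁ + u₂ / Real.sqrt 3) + Dq u₁ u₂ u₃)

/-- For a unit vector `u` with `b := (√3 u₁ + u₂)/2 ∈ (−1/2, 1)`, the eigenvalue
`λ₃(u)` is strictly larger than both `λ₁(u)` and `λ₂(u)`. -/
theorem stmt4 (u₁ u₂ u₃ b : ℝ) (hu : u₁ ^ 2 + u₂ ^ 2 + u₃ ^ 2 = 1)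
    (hb : b = (Real.sqrt 3 * u₁ + u₂) / 2)
    (hlow : -(1 / 2) < b) (hhigh : b < 1) :
    lam₁ u₁ u₂ u₃ < lam₃ u₁ u₂ u₃ ∧ lam₂ u₁ u₂ u₃ < lam₃ u₁ u₂ u₃ := by
  have hs3 : Real.sqrt 3 ^ 2 = 3 := Real.sq_sqrt (by norm_num)
  have hs3pos : (0:ℝ) < Real.sqrt 3 := Real.sqrt_pos.mpr (by norm_num)
  have hXnn : (0:ℝ) ≤ (u₁ - Real.sqrt 3 * u₂) ^ 2 + 4 * u₃ ^ 2 := by positivity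
  have hD2 : Dq u₁ u₂ u₃ ^ 2 = 4 * (1 - b ^ 2) := by
    unfold Dq
    rw [Real.sq_sqrt hXnn, hb]
    nlinarith [hs3, hu]
  have hDnn : 0 ≤ Dq u₁ u₂ u₃ := Real.sqrt_nonneg _
  have hDpos : 0 < Dq u₁ u₂ u₃ := by
    nlinarith [hD2, hDnn]
  have h13 : lam₁ u₁ u₂ u₃ < lam₃ u₁ u₂ u₃ := by
    unfold lam₁ lam₃
    have h3s : 3 * (u₁ + u₂ / Real.sqrt 3) = 2 * Real.sqrt 3 * b := by
      field_simp [hb]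
      nlinarith [hs3]
    have hkey2 : 0 < 2 * Real.sqrt 3 * b + Dq u₁ u₂ u₃ := by
      rcases le_or_gt 0 b with hbn | hbn
      · nlinarith [mul_nonneg hs3pos.le hbn]
      · have hpos : 0 < Dq u₁ u₂ u₃ - 2 * Real.sqrt 3 * b := by
          nlinarith [mul_pos hs3pos (neg_pos.mpr hbn)]
        have h16 : 0 < 4 - 16 * b ^ 2 := by nlinarith
        nlinarith [hD2, hs3, hpos, h16, mul_pos hpos hpos]
    linarith [h3s, hkey2]
  refine ⟨h13, ?_⟩
  unfold lam₂ lam₃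
  linarith
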